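/- There is a polynomial p such that the following holds. For every document d and all sequential vset-automata A1 and A2 such that, with X := Vars(A1) ∩ Vars(A2), A1 is semi-functional for X and A2 is synchronized for X, there exists a sequential vset-automaton A_d with ⟦A_d⟧(d) = ⟦A1 ∖ A2⟧(d) whose total size (number of states plus number of transitions) is at most p(size of A1 + size of A2 + |d| + |Vars(A1) ∪ Vars(A2)|). -/

import Mathlib

namespace Spanners

open scoped Classical

/-! ### Spans and mappings -/

abbrev Span := ℕ × ℕ

abbrev VMapping := ℕ → Option Span

def emptyMapping : VMapping := fun _ => none

def mapDom (μ : VMapping) : Set ℕ := {x | μ x ≠ none}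

/-- Two mappings are compatible if they agree on every common variable. -/
def Compatible (μ1 μ2 : VMapping) : Prop :=
  ∀ x s1 s2, μ1 x = some s1 → μ2 x = some s2 → s1 = s2

def DisjointDom (μ1 μ2 : VMapping) : Prop :=
  ∀ x, μ1 x = none ∨ μ2 x = none

def munion (μ1 μ2 : VMapping) : VMapping := fun x =>
  match μ1 x with
  | some s => some s
  | none => μ2 x

def minsert (x : ℕ) (s : Span) (μ : VMapping) : VMapping :=
  fun y => if y = x then some s else μ y

/-- Natural join of two sets of mappings. -/
def joinSet (S1 S2 : Set VMapping) : Set VMapping :=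
  {μ | ∃ μ1 ∈ S1, ∃ μ2 ∈ S2, Compatible μ1 μ2 ∧ μ = munion μ1 μ2}

/-- Difference of two sets of mappings. -/
def diffSet (S1 S2 : Set VMapping) : Set VMapping :=
  {μ1 | μ1 ∈ S1 ∧ ∀ μ2 ∈ S2, ¬ Compatible μ1 μ2}

/-- Restriction of a mapping to a set of variables. -/
noncomputable def restrictMap (μ : VMapping) (V : Set ℕ) : VMapping :=
  fun x => if x ∈ V then μ x else none

/-- Projection of a set of mappings to a set of variables. -/
def projSet (V : Set ℕ) (S : Set VMapping) : Set VMapping :=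
  {μ' | ∃ μ ∈ S, μ' = restrictMap μ V}

/-! ### Regex formulas -/

inductive RGX (Sig : Type) where
  | empty : RGX Sig
  | eps : RGX Sig
  | letter : Sig → RGX Sig
  | union : RGX Sig → RGX Sig → RGX Sig
  | concat : RGX Sig → RGX Sig → RGX Sig
  | star : RGX Sig → RGX Sig
  | bind : ℕ → RGX Sig → RGX Sig

variable {Sig : Type}

def RGX.vars : RGX Sig → Finset ℕ
  | .empty => ∅
  | .eps => ∅
  | .letter _ => ∅
  | .union a b => a.vars ∪ b.vars
  | .concat a b => a.vars ∪ b.vars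
  | .star a => a.vars
  | .bind x a => insert x a.vars

def RGX.size : RGX Sig → ℕ
  | .empty => 1
  | .eps => 1
  | .letter _ => 1
  | .union a b => a.size + b.size + 1
  | .concat a b => a.size + b.size + 1
  | .star a => a.size + 1
  | .bind _ a => a.size + 1

/-- The schemaless semantics `⟨α⟩(d)`: `RMatch α d i j μ` means `([i,j⟩, μ) ∈ ⟨α⟩(d)`. -/
inductive RMatch : RGX Sig → List Sig → ℕ → ℕ → VMapping → Prop where
  | eps {d : List Sig} {i : ℕ} (h1 : 1 ≤ i) (h2 : i ≤ d.length + 1) :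
      RMatch .eps d i i emptyMapping
  | letter {d : List Sig} {i : ℕ} {σ : Sig} (h1 : 1 ≤ i) (h2 : d[i - 1]? = some σ) :
      RMatch (.letter σ) d i (i + 1) emptyMapping
  | unionL {a b : RGX Sig} {d : List Sig} {i j : ℕ} {μ : VMapping}
      (h : RMatch a d i j μ) : RMatch (.union a b) d i j μ
  | unionR {a b : RGX Sig} {d : List Sig} {i j : ℕ} {μ : VMapping}
      (h : RMatch b d i j μ) : RMatch (.union a b) d i j μ
  | concat {a b : RGX Sig} {d : List Sig} {i k j : ℕ} {μ1 μ2 : VMapping}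
      (h1 : RMatch a d i k μ1) (h2 : RMatch b d k j μ2) (hd : DisjointDom μ1 μ2) :
      RMatch (.concat a b) d i j (munion μ1 μ2)
  | bind {x : ℕ} {a : RGX Sig} {d : List Sig} {i j : ℕ} {μ : VMapping}
      (h : RMatch a d i j μ) (hx : μ x = none) :
      RMatch (.bind x a) d i j (minsert x (i, j) μ)
  | starNil {a : RGX Sig} {d : List Sig} {i : ℕ} (h1 : 1 ≤ i) (h2 : i ≤ d.length + 1) :
      RMatch (.star a) d i i emptyMapping
  | starCons {a : RGX Sig} {d : List Sig} {i k j : ℕ} {μ1 μ2 : VMapping}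
      (h1 : RMatch a d i k μ1) (h2 : RMatch (.star a) d k j μ2) (hd : DisjointDom μ1 μ2) :
      RMatch (.star a) d i j (munion μ1 μ2)

/-- `⟦α⟧(d)`: mappings extracted with the full span. -/
def rgxSem (α : RGX Sig) (d : List Sig) : Set VMapping :=
  {μ | RMatch α d 1 (d.length + 1) μ}

/-- Sequential regex formulas. -/
def RGX.Sequential : RGX Sig → Prop
  | .empty => True
  | .eps => True
  | .letter _ => True
  | .union a b => a.Sequential ∧ b.Sequential
  | .concat a b => a.Sequential ∧ b.Sequential ∧ Disjoint a.vars b.vars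
  | .star a => a.Sequential ∧ a.vars = ∅
  | .bind x a => a.Sequential ∧ x ∉ a.vars

/-- Variable-free words over the alphabet (built from ε, letters and concatenation). -/
inductive RGX.IsWord : RGX Sig → Prop where
  | eps : RGX.IsWord .eps
  | letter (σ : Sig) : RGX.IsWord (.letter σ)
  | concat {a b : RGX Sig} : a.IsWord → b.IsWord → RGX.IsWord (.concat a b)

/-- Functional for a set `V` of variables. -/
inductive FunctionalFor : RGX Sig → Finset ℕ → Prop where
  | word {α : RGX Sig} (h : α.IsWord) : FunctionalFor α ∅
  | union {a b : RGX Sig} {V : Finset ℕ} (ha : FunctionalFor a V) (hb : FunctionalFor b V) :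
      FunctionalFor (.union a b) V
  | concat {a b : RGX Sig} {V : Finset ℕ} (V1 : Finset ℕ) (hsub : V1 ⊆ V)
      (ha : FunctionalFor a V1) (hb : FunctionalFor b (V \ V1)) :
      FunctionalFor (.concat a b) V
  | star {a : RGX Sig} (h : FunctionalFor a ∅) : FunctionalFor (.star a) ∅
  | bind {x : ℕ} {a : RGX Sig} {V : Finset ℕ} (h : FunctionalFor a (V.erase x)) :
      FunctionalFor (.bind x a) V

def RGX.Functional (α : RGX Sig) : Prop := FunctionalFor α α.vars

/-- Disjunctive functional regex formulas: finite disjunctions of functional regex formulas. -/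
inductive DisjFunctional : RGX Sig → Prop where
  | base {γ : RGX Sig} (h : γ.Functional) : DisjFunctional γ
  | union {a b : RGX Sig} (ha : DisjFunctional a) (hb : DisjFunctional b) :
      DisjFunctional (.union a b)

/-- Number of disjuncts of a (disjunctive) regex formula. -/
def countDisjuncts : RGX Sig → ℕ
  | .union a b => countDisjuncts a + countDisjuncts b
  | _ => 1

/-- Disjunction-free regex formulas. -/
def RGX.DisjFree : RGX Sig → Prop
  | .union _ _ => False
  | .concat a b => a.DisjFree ∧ b.DisjFree
  | .star a => a.DisjFree
  | .bind _ a => a.DisjFree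
  | _ => True

/-- `γ` is synchronized for `x`: no subformula `γ1 ∨ γ2` contains `x`. -/
def RGX.SyncFor : RGX Sig → ℕ → Prop
  | .union a b, x => (x ∉ a.vars ∧ x ∉ b.vars) ∧ a.SyncFor x ∧ b.SyncFor x
  | .concat a b, x => a.SyncFor x ∧ b.SyncFor x
  | .star a, x => a.SyncFor x
  | .bind _ a, x => a.SyncFor x
  | _, _ => True

/-- Concatenation of a list of regex formulas. -/
def concatList : List (RGX Sig) → RGX Sig
  | [] => .eps
  | [α] => α
  | α :: rest => .concat α (concatList rest)

/-- Disjunction of a list of regex formulas. -/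
def disjList : List (RGX Sig) → RGX Sig
  | [] => .empty
  | [α] => α
  | α :: rest => .union α (disjList rest)

/-! ### vset-automata -/

inductive VLabel (Sig : Type) where
  | eps : VLabel Sig
  | letter : Sig → VLabel Sig
  | openv : ℕ → VLabel Sig
  | closev : ℕ → VLabel Sig
deriving DecidableEq

structure VA (Sig : Type) [DecidableEq Sig] where
  q0 : ℕ
  F : Finset ℕ
  δ : Finset (ℕ × VLabel Sig × ℕ)

variable [DecidableEq Sig]

/-- The states of a VA: the initial state and all states mentioned in `F` or in transitions. -/
def statesOf (A : VA Sig) : Finset ℕ :=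
  insert A.q0 (A.F ∪ A.δ.image (fun t => t.1) ∪ A.δ.image (fun t => t.2.2))

def labelVars : VLabel Sig → Finset ℕ
  | .openv x => {x}
  | .closev x => {x}
  | _ => ∅

/-- `Vars(A)`: the variables mentioned in the transitions of `A`. -/
def varsOf (A : VA Sig) : Finset ℕ := A.δ.biUnion (fun t => labelVars t.2.1)

/-- Total size of a VA: number of states plus number of transitions. -/
def vaSize (A : VA Sig) : ℕ := (statesOf A).card + A.δ.card

/-- `A.PathFrom p ls q`: a path (run segment) from `p` to `q` with label sequence `ls`. -/
inductive VA.PathFrom (A : VA Sig) : ℕ → List (VLabel Sig) → ℕ → Prop where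
  | nil (q : ℕ) : VA.PathFrom A q [] q
  | cons {p q r : ℕ} {l : VLabel Sig} {ls : List (VLabel Sig)}
      (h : (p, l, q) ∈ A.δ) (htail : VA.PathFrom A q ls r) : VA.PathFrom A p (l :: ls) r

/-- The word (document) read by a sequence of labels. -/
def readWord : List (VLabel Sig) → List Sig :=
  List.filterMap fun l => match l with
    | VLabel.letter σ => some σ
    | _ => none

def isLetterL : VLabel Sig → Bool
  | .letter _ => true
  | _ => false

/-- The current position in the document just before executing the `k`-th label. -/
def posAt (ls : List (VLabel Sig)) (k : ℕ) : ℕ := 1 + (ls.take k).countP isLetterL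

/-- Validity of a run, given by its label sequence. -/
def ValidLabels (ls : List (VLabel Sig)) : Prop :=
  ∀ x : ℕ,
    ls.count (VLabel.openv x) ≤ 1 ∧
    ls.count (VLabel.closev x) ≤ 1 ∧
    ((VLabel.openv x) ∈ ls ↔ (VLabel.closev x) ∈ ls) ∧
    ∀ i j : ℕ, ls[i]? = some (VLabel.openv x) → ls[j]? = some (VLabel.closev x) →
      posAt ls i ≤ posAt ls j

/-- The mapping `μ_ρ` extracted from a (valid accepting) run with label sequence `ls`. -/
def runMapping (ls : List (VLabel Sig)) : VMapping := fun x =>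
  if (VLabel.openv x) ∈ ls then
    some (posAt ls (ls.idxOf (VLabel.openv x)), posAt ls (ls.idxOf (VLabel.closev x)))
  else none

/-- `ls` is the label sequence of an accepting run of `A`. -/
def AcceptsWith (A : VA Sig) (ls : List (VLabel Sig)) : Prop :=
  ∃ qf, VA.PathFrom A A.q0 ls qf ∧ qf ∈ A.F

/-- `⟦A⟧(d)`. -/
def vaSem (A : VA Sig) (d : List Sig) : Set VMapping :=
  {μ | ∃ ls, AcceptsWith A ls ∧ readWord ls = d ∧ ValidLabels ls ∧ μ = runMapping ls}

/-- A VA is sequential if all of its accepting runs are valid. -/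
def VA.Sequential (A : VA Sig) : Prop := ∀ ls, AcceptsWith A ls → ValidLabels ls

/-- A run from the initial state to `q` that is a prefix of an accepting run. -/
def PrefixRun (A : VA Sig) (ls : List (VLabel Sig)) (q : ℕ) : Prop :=
  VA.PathFrom A A.q0 ls q ∧ ∃ ls' qf, VA.PathFrom A q ls' qf ∧ qf ∈ A.F

/-- `A` is semi-functional for the variable `x`: no state has extended configuration `d`. -/
def SemiFunctionalFor (A : VA Sig) (x : ℕ) : Prop :=
  ¬ ∃ q ls1 ls2, PrefixRun A ls1 q ∧ PrefixRun A ls2 q ∧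
      (VLabel.closev x) ∈ ls1 ∧ (VLabel.openv x) ∉ ls2

def SemiFunctionalForSet (A : VA Sig) (X : Finset ℕ) : Prop :=
  ∀ x ∈ X, SemiFunctionalFor A x

/-- Functional VA: sequential, and every accepting run opens and closes every variable. -/
def FunctionalVA (A : VA Sig) : Prop :=
  A.Sequential ∧ ∀ ls, AcceptsWith A ls → ∀ x ∈ varsOf A,
    (VLabel.openv x) ∈ ls ∧ (VLabel.closev x) ∈ ls

/-- `l` has a unique target state in `A`. -/
def UniqueTarget (A : VA Sig) (l : VLabel Sig) : Prop :=
  ∃ qt : ℕ, ∀ p q : ℕ, (p, l, q) ∈ A.δ → q = qt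

/-- `A` is synchronized for the variable `x`. -/
def SyncForVA (A : VA Sig) (x : ℕ) : Prop :=
  UniqueTarget A (VLabel.openv x) ∧ UniqueTarget A (VLabel.closev x) ∧
    ((∀ ls, AcceptsWith A ls → (VLabel.openv x) ∈ ls ∧ (VLabel.closev x) ∈ ls) ∨
     (∀ ls, AcceptsWith A ls → (VLabel.openv x) ∉ ls ∧ (VLabel.closev x) ∉ ls))

/-- `A` is the disjunctive functional VA with functional components `parts`. -/
def DisjFunctionalVAWith (A : VA Sig) (parts : List (VA Sig)) : Prop :=
  (∀ B ∈ parts, FunctionalVA B) ∧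
  (parts.Pairwise fun B C => Disjoint (statesOf B) (statesOf C)) ∧
  (∀ B ∈ parts, A.q0 ∉ statesOf B) ∧
  A.F = parts.foldr (fun B s => B.F ∪ s) (∅ : Finset ℕ) ∧
  A.δ = (parts.map (fun B => (A.q0, (VLabel.eps : VLabel Sig), B.q0))).toFinset
        ∪ parts.foldr (fun B s => B.δ ∪ s) (∅ : Finset (ℕ × VLabel Sig × ℕ))

def DisjFunctionalVA (A : VA Sig) : Prop := ∃ parts, DisjFunctionalVAWith A parts

/-! ### 3CNF formulas -/

/-- A 3CNF clause over `n` Boolean variables: a triple of literals; `(i, true)` is `xᵢ`,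
`(i, false)` is `¬xᵢ`. -/
def Clause3 (n : ℕ) : Type := (Fin n × Bool) × (Fin n × Bool) × (Fin n × Bool)

def litsOf {n : ℕ} (c : Clause3 n) : List (Fin n × Bool) := [c.1, c.2.1, c.2.2]

def clauseSat {n : ℕ} (τ : Fin n → Bool) (c : Clause3 n) : Prop :=
  ∃ l ∈ litsOf c, τ l.1 = l.2

def Sat3 {n m : ℕ} (φ : Fin m → Clause3 n) : Prop :=
  ∃ τ : Fin n → Bool, ∀ j, clauseSat τ (φ j)

end Spanners

/-!
`A_d = diffVA A1 A2 d` is the product of `A1` with a deterministic checker which, following a run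
of `A1`, decides whether some accepting run of `A2` on `d` is compatible with it; `A_d` accepts the
runs for which there is none.

Cut a run of `A1` into blocks, the letter-free stretches between consecutive letters.
Compatibility only constrains the shared variables that every accepting run of `A2` uses (by
synchronization, no accepting run of `A2` uses the other ones), and it asks `A2` to perform each of
their operations in the same block as `A1` does. By semi-functionality, whether a run of `A1` has
performed such an operation depends only on the state it reached, so the operations of a block can
be read off the states at its two ends. By synchronization, right after an operation `e` the
automaton `A2` is in the unique target state of `e`; by sequentiality, at most one operation of a
block can come last in a run of `A2` that still accepts, as two candidates would give an accepting
run repeating an operation. So the checker only remembers an anchor: the state of `A2` after the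
last block with shared operations, and the number of letters read before it. This leaves
`O(|d|² |Q1| |Q2|)` checker states.
-/

namespace Spanners

open scoped Classical

variable {Sig : Type}

section Labels

def LetterFree (v : List (VLabel Sig)) : Prop := ∀ l ∈ v, isLetterL l = false

/-- `l` occurs in `v` after exactly `k` letters, i.e. at document position `k + 1`. -/
def Occ (v : List (VLabel Sig)) (l : VLabel Sig) (k : ℕ) : Prop :=
  ∃ a b, v = a ++ l :: b ∧ a.countP isLetterL = k

@[simp]
theorem readWord_append (u v : List (VLabel Sig)) :
    readWord (u ++ v) = readWord u ++ readWord v := by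
  simp [readWord, List.filterMap_append]

theorem length_readWord (u : List (VLabel Sig)) :
    (readWord u).length = u.countP isLetterL := by
  induction u with
  | nil => rfl
  | cons l u ih => cases l <;> simp_all [readWord, isLetterL, List.countP_cons]

theorem readWord_eq_take_drop {u v : List (VLabel Sig)} {d : List Sig}
    (h : readWord (u ++ v) = d) :
    readWord u = d.take (u.countP isLetterL) ∧ readWord v = d.drop (u.countP isLetterL) := by
  subst h
  rw [← length_readWord, readWord_append]
  exact ⟨(List.take_left' rfl).symm, (List.drop_left' rfl).symm⟩

theorem countP_eq_of_readWord_eq_take {u : List (VLabel Sig)} {d : List Sig} {c : ℕ}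
    (h : readWord u = d.take c) (hc : c ≤ d.length) : u.countP isLetterL = c := by
  rw [← length_readWord, h, List.length_take]
  omega

theorem letterFree_append {u v : List (VLabel Sig)} :
    LetterFree (u ++ v) ↔ LetterFree u ∧ LetterFree v :=
  List.forall_mem_append

theorem LetterFree.countP_eq_zero {v : List (VLabel Sig)} (h : LetterFree v) :
    v.countP isLetterL = 0 :=
  List.countP_eq_zero.2 fun l hl => by simp [h l hl]

theorem LetterFree.readWord_eq_nil {v : List (VLabel Sig)} (h : LetterFree v) :
    readWord v = [] :=
  List.eq_nil_of_length_eq_zero (by rw [length_readWord, h.countP_eq_zero])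

theorem Occ.mem {v : List (VLabel Sig)} {l : VLabel Sig} {k : ℕ} (h : Occ v l k) : l ∈ v := by
  obtain ⟨a, b, rfl, -⟩ := h
  simp

theorem exists_occ {v : List (VLabel Sig)} {l : VLabel Sig} (h : l ∈ v) : ∃ k, Occ v l k := by
  obtain ⟨a, b, rfl⟩ := List.append_of_mem h
  exact ⟨_, a, b, rfl, rfl⟩

theorem Occ.le_countP {v : List (VLabel Sig)} {l : VLabel Sig} {k : ℕ} (h : Occ v l k) :
    k ≤ v.countP isLetterL := by
  obtain ⟨a, b, rfl, rfl⟩ := h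
  simp [List.countP_append]

theorem Occ.append_right {v : List (VLabel Sig)} {l : VLabel Sig} {k : ℕ}
    (h : Occ v l k) (w : List (VLabel Sig)) : Occ (v ++ w) l k := by
  obtain ⟨a, b, rfl, hk⟩ := h
  exact ⟨a, b ++ w, by simp, hk⟩

theorem Occ.append_left {v : List (VLabel Sig)} {l : VLabel Sig} {k : ℕ}
    (h : Occ v l k) (w : List (VLabel Sig)) :
    Occ (w ++ v) l (w.countP isLetterL + k) := by
  obtain ⟨a, b, rfl, rfl⟩ := h
  exact ⟨w ++ a, b, by simp, by simp [List.countP_append]⟩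

theorem occ_append {u v : List (VLabel Sig)} {l : VLabel Sig} {k : ℕ}
    (h : Occ (u ++ v) l k) :
    Occ u l k ∨ ∃ k', Occ v l k' ∧ k = u.countP isLetterL + k' := by
  obtain ⟨a, b, hab, rfl⟩ := h
  rcases List.append_eq_append_iff.1 hab.symm with ⟨c, rfl, hv⟩ | ⟨c, rfl, hu⟩
  · rcases c with _ | ⟨y, c⟩
    · exact Or.inr ⟨0, ⟨[], b, by simpa using hv.symm, rfl⟩, by simp⟩
    · obtain ⟨rfl, rfl⟩ := List.cons_eq_cons.1 hv
      exact Or.inl ⟨a, c, rfl, rfl⟩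
  · exact Or.inr ⟨_, ⟨c, b, hu, rfl⟩, by simp [List.countP_append]⟩

theorem Occ.of_append_of_not_mem_right {u v : List (VLabel Sig)} {l : VLabel Sig} {k : ℕ}
    (h : Occ (u ++ v) l k) (hv : l ∉ v) : Occ u l k :=
  (occ_append h).resolve_right fun ⟨_, h', _⟩ => hv h'.mem

theorem Occ.of_append_of_not_mem_left {u v : List (VLabel Sig)} {l : VLabel Sig} {k : ℕ}
    (h : Occ (u ++ v) l k) (hu : l ∉ u) :
    ∃ k', Occ v l k' ∧ k = u.countP isLetterL + k' :=
  (occ_append h).resolve_left fun h' => hu h'.mem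

theorem occ_block {pre blk : List (VLabel Sig)} {e : VLabel Sig} {k : ℕ}
    (hlf : LetterFree blk) (h : Occ (pre ++ blk) e k) :
    Occ pre e k ∨ (e ∈ blk ∧ k = pre.countP isLetterL) := by
  refine (occ_append h).imp_right fun ⟨k', hk', hk⟩ => ⟨hk'.mem, ?_⟩
  have := hk'.le_countP
  rw [hlf.countP_eq_zero] at this
  omega

theorem Occ.posAt_idxOf [DecidableEq Sig] {v : List (VLabel Sig)} {l : VLabel Sig} {k : ℕ}
    (h : Occ v l k) (hc : v.count l ≤ 1) : posAt v (v.idxOf l) = k + 1 := by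
  obtain ⟨a, b, rfl, rfl⟩ := h
  have ha : l ∉ a := fun hl => by
    have := List.count_pos_iff.2 hl
    simp [List.count_append] at hc
    omega
  simp [posAt, List.idxOf_append_of_notMem ha, Nat.add_comm]

theorem Occ.unique [DecidableEq Sig] {v : List (VLabel Sig)} {l : VLabel Sig} {k k' : ℕ}
    (h : Occ v l k) (h' : Occ v l k') (hc : v.count l ≤ 1) : k = k' := by
  have := (h.posAt_idxOf hc).symm.trans (h'.posAt_idxOf hc)
  omega

def IsVarOp (l : VLabel Sig) : Prop := ∃ x, l = .openv x ∨ l = .closev x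

theorem ValidLabels.count_le_one [DecidableEq Sig] {ls : List (VLabel Sig)}
    (hv : ValidLabels ls) {l : VLabel Sig} (hl : IsVarOp l) : ls.count l ≤ 1 := by
  obtain ⟨x, rfl | rfl⟩ := hl
  exacts [(hv x).1, (hv x).2.1]

theorem ValidLabels.not_mem_right [DecidableEq Sig] {u v : List (VLabel Sig)}
    (hv : ValidLabels (u ++ v)) {l : VLabel Sig} (hl : IsVarOp l) (hu : l ∈ u) : l ∉ v :=
  fun hv' => by
    have := hv.count_le_one hl
    have := List.count_pos_iff.2 hu
    have := List.count_pos_iff.2 hv'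
    simp only [List.count_append] at *
    omega

theorem runMapping_of_occ [DecidableEq Sig] {ls : List (VLabel Sig)} (hv : ValidLabels ls)
    {x i j : ℕ}
    (ho : Occ ls (.openv x) i) (hc : Occ ls (.closev x) j) :
    runMapping ls x = some (i + 1, j + 1) := by
  rw [runMapping, if_pos ho.mem, ho.posAt_idxOf (hv x).1, hc.posAt_idxOf (hv x).2.1]

theorem _root_.List.exists_last_occurrence {α : Type*} {p : α → Prop} {l : List α}
    (h : ∃ x ∈ l, p x) : ∃ a x b, l = a ++ x :: b ∧ p x ∧ ∀ y ∈ b, ¬ p y := by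
  induction l using List.reverseRecOn with
  | nil => simp at h
  | append_singleton l z ih =>
    by_cases hz : p z
    · exact ⟨l, z, [], by simp, hz, by simp⟩
    obtain ⟨x, hx, hpx⟩ := h
    have hxl : x ∈ l :=
      (List.mem_append.1 hx).resolve_right fun hxz => hz (List.mem_singleton.1 hxz ▸ hpx)
    obtain ⟨a, y, b, rfl, hy, hb⟩ := ih ⟨x, hxl, hpx⟩
    refine ⟨a, y, b ++ [z], by simp, hy, fun w hw => ?_⟩
    rcases List.mem_append.1 hw with hw | hw
    · exact hb w hw
    · rw [List.mem_singleton.1 hw]; exact hz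

end Labels

variable [DecidableEq Sig]

section Paths

variable {A : VA Sig}

theorem VA.PathFrom.append {p q r : ℕ} {u v : List (VLabel Sig)}
    (h1 : A.PathFrom p u q) (h2 : A.PathFrom q v r) : A.PathFrom p (u ++ v) r := by
  induction h1 with
  | nil => simpa
  | cons h _ ih => exact .cons h (ih h2)

theorem VA.PathFrom.single {p q : ℕ} {l : VLabel Sig} (h : (p, l, q) ∈ A.δ) :
    A.PathFrom p [l] q :=
  .cons h (.nil q)

theorem VA.PathFrom.split {p r : ℕ} {u v : List (VLabel Sig)}
    (h : A.PathFrom p (u ++ v) r) : ∃ q, A.PathFrom p u q ∧ A.PathFrom q v r := by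
  induction u generalizing p with
  | nil => exact ⟨p, .nil p, h⟩
  | cons l u ih =>
    cases h with
    | cons h htail =>
      obtain ⟨q, h1, h2⟩ := ih htail
      exact ⟨q, .cons h h1, h2⟩

theorem VA.PathFrom.mem_varsOf {p q x : ℕ} {ls : List (VLabel Sig)} (h : A.PathFrom p ls q)
    {l : VLabel Sig} (hl : l ∈ ls) (hx : x ∈ labelVars l) : x ∈ varsOf A := by
  induction h with
  | nil => simp at hl
  | @cons p' q' _ l' _ ht _ ih =>
    rcases List.mem_cons.1 hl with rfl | hl
    · exact Finset.mem_biUnion.2 ⟨(p', l, q'), ht, hx⟩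
    · exact ih hl

theorem target_mem_statesOf {p q : ℕ} {l : VLabel Sig} (h : (p, l, q) ∈ A.δ) :
    q ∈ statesOf A := by
  unfold statesOf
  exact Finset.mem_insert_of_mem (Finset.mem_union_right _ (Finset.mem_image.2 ⟨_, h, rfl⟩))

theorem q0_mem_statesOf : A.q0 ∈ statesOf A := Finset.mem_insert_self _ _

theorem card_statesOf_le (A : VA Sig) : (statesOf A).card ≤ 1 + A.F.card + 2 * A.δ.card := by
  unfold statesOf
  grw [Finset.card_insert_le, Finset.card_union_le, Finset.card_union_le, Finset.card_image_le,
    Finset.card_image_le]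
  omega

end Paths

section Product

variable {S : Type}

/-- `A.Trace f q s ls r s'`: a path of `A` from `q` to `r` with labels `ls`, along which the
deterministic checker `f` moves from `s` to `s'`. -/
inductive VA.Trace (A : VA Sig) (f : S → ℕ × VLabel Sig × ℕ → S) :
    ℕ → S → List (VLabel Sig) → ℕ → S → Prop where
  | nil (q : ℕ) (s : S) : VA.Trace A f q s [] q s
  | cons {q q' r : ℕ} {s s' : S} {l : VLabel Sig} {ls : List (VLabel Sig)}
      (h : (q, l, q') ∈ A.δ) (ht : VA.Trace A f q' (f s (q, l, q')) ls r s') :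
      VA.Trace A f q s (l :: ls) r s'

variable {A : VA Sig} {f : S → ℕ × VLabel Sig × ℕ → S}

theorem VA.Trace.path {q r : ℕ} {s s' : S} {ls : List (VLabel Sig)}
    (h : A.Trace f q s ls r s') : A.PathFrom q ls r := by
  induction h with
  | nil => exact .nil _
  | cons h _ ih => exact .cons h ih

theorem VA.PathFrom.exists_trace {q r : ℕ} {ls : List (VLabel Sig)} (h : A.PathFrom q ls r)
    (s : S) : ∃ s', A.Trace f q s ls r s' := by
  induction h generalizing s with
  | nil => exact ⟨s, .nil _ _⟩
  | cons h _ ih =>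
    obtain ⟨s', ht⟩ := ih (f s (_, _, _))
    exact ⟨s', .cons h ht⟩

theorem VA.Trace.split {q r : ℕ} {s s'' : S} {u v : List (VLabel Sig)}
    (h : A.Trace f q s (u ++ v) r s'') :
    ∃ p s', A.Trace f q s u p s' ∧ A.Trace f p s' v r s'' := by
  induction u generalizing q s with
  | nil => exact ⟨q, s, .nil _ _, h⟩
  | cons l u ih =>
    cases h with
    | cons h ht =>
      obtain ⟨p, s', h1, h2⟩ := ih ht
      exact ⟨p, s', .cons h h1, h2⟩

theorem VA.Trace.snoc_inv {q r : ℕ} {s s' : S} {u : List (VLabel Sig)} {l : VLabel Sig}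
    (h : A.Trace f q s (u ++ [l]) r s') :
    ∃ p s₁, A.Trace f q s u p s₁ ∧ (p, l, r) ∈ A.δ ∧ s' = f s₁ (p, l, r) := by
  obtain ⟨p, s₁, h1, h2⟩ := h.split
  rcases h2 with _ | ⟨hl, _ | _⟩
  exact ⟨p, s₁, h1, hl, rfl⟩

theorem VA.Trace.nil_inv {q r : ℕ} {s s' : S} (h : A.Trace f q s [] r s') : r = q ∧ s' = s := by
  cases h
  exact ⟨rfl, rfl⟩

variable [Encodable S]

def prodState (q : ℕ) (s : S) : ℕ := Nat.pair q (Encodable.encode s)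

theorem prodState_inj {q q' : ℕ} {s s' : S} (h : prodState q s = prodState q' s') :
    q = q' ∧ s = s' := by
  obtain ⟨h1, h2⟩ := Nat.pair_eq_pair.1 h
  exact ⟨h1, Encodable.encode_injective h2⟩

/-- `SF` should contain every checker state reachable from `s0`: only those are paired with the
transitions of `A`. -/
noncomputable def prodVA (A : VA Sig) (f : S → ℕ × VLabel Sig × ℕ → S) (s0 : S)
    (SF : Finset S) (Acc : ℕ → S → Prop) : VA Sig where
  q0 := prodState A.q0 s0
  F := ((A.F ×ˢ SF).filter fun p => Acc p.1 p.2).image fun p => prodState p.1 p.2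
  δ := (A.δ ×ˢ SF).image fun t =>
    (prodState t.1.1 t.2, t.1.2.1, prodState t.1.2.2 (f t.2 t.1))

variable {s0 : S} {SF : Finset S} {Acc : ℕ → S → Prop}

theorem exists_trace_of_pathFrom_prodVA {q R : ℕ} {s : S} {ls : List (VLabel Sig)}
    (h : (prodVA A f s0 SF Acc).PathFrom (prodState q s) ls R) :
    ∃ r s', R = prodState r s' ∧ A.Trace f q s ls r s' := by
  generalize hQ : prodState q s = Q at h
  induction h generalizing q s with
  | nil => exact ⟨q, s, hQ.symm, .nil _ _⟩
  | cons h _ ih =>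
    subst hQ
    obtain ⟨⟨⟨a, l, b⟩, t⟩, hmem, heq⟩ := Finset.mem_image.1 h
    have hA := (Finset.mem_product.1 hmem).1
    simp only [Prod.mk.injEq] at heq
    obtain ⟨h1, rfl, rfl⟩ := heq
    obtain ⟨rfl, rfl⟩ := prodState_inj h1
    obtain ⟨r, s', hR, ht⟩ := ih rfl
    exact ⟨r, s', hR, .cons hA ht⟩

theorem VA.Trace.pathFrom_prodVA (hSF : ∀ s ∈ SF, ∀ t ∈ A.δ, f s t ∈ SF) {q r : ℕ}
    {s s' : S} {ls : List (VLabel Sig)} (h : A.Trace f q s ls r s') (hs : s ∈ SF) :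
    (prodVA A f s0 SF Acc).PathFrom (prodState q s) ls (prodState r s') ∧ s' ∈ SF := by
  induction h with
  | nil => exact ⟨.nil _, hs⟩
  | @cons q q' r s s' l ls h _ ih =>
    obtain ⟨ih1, ih2⟩ := ih (hSF _ hs _ h)
    have hδ : (prodState q s, l, prodState q' (f s (q, l, q'))) ∈ (prodVA A f s0 SF Acc).δ :=
      Finset.mem_image.2 ⟨((q, l, q'), s), Finset.mem_product.2 ⟨h, hs⟩, rfl⟩
    exact ⟨.cons hδ ih1, ih2⟩

theorem acceptsWith_prodVA_iff (hSF : ∀ s ∈ SF, ∀ t ∈ A.δ, f s t ∈ SF) (hs0 : s0 ∈ SF)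
    {ls : List (VLabel Sig)} :
    AcceptsWith (prodVA A f s0 SF Acc) ls ↔
      ∃ r s, A.Trace f A.q0 s0 ls r s ∧ r ∈ A.F ∧ Acc r s := by
  constructor
  · rintro ⟨R, hpath, hR⟩
    obtain ⟨r, s, rfl, ht⟩ := exists_trace_of_pathFrom_prodVA hpath
    obtain ⟨⟨a, b⟩, hab, heq⟩ := Finset.mem_image.1 hR
    obtain ⟨rfl, rfl⟩ := prodState_inj heq
    simp only [Finset.mem_filter, Finset.mem_product] at hab
    exact ⟨a, b, ht, hab.1.1, hab.2⟩
  · rintro ⟨r, s, ht, hr, hacc⟩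
    obtain ⟨hpath, hs⟩ := ht.pathFrom_prodVA (Acc := Acc) hSF hs0
    refine ⟨_, hpath, Finset.mem_image.2 ⟨(r, s), ?_, rfl⟩⟩
    simp only [Finset.mem_filter, Finset.mem_product]
    exact ⟨⟨hr, hs⟩, hacc⟩

theorem prodVA_sequential (hSF : ∀ s ∈ SF, ∀ t ∈ A.δ, f s t ∈ SF) (hs0 : s0 ∈ SF)
    (hA : A.Sequential) : (prodVA A f s0 SF Acc).Sequential := fun ls hls => by
  obtain ⟨r, s, ht, hr, -⟩ := (acceptsWith_prodVA_iff hSF hs0).1 hls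
  exact hA ls ⟨r, ht.path, hr⟩

theorem card_prodVA_F_le : (prodVA A f s0 SF Acc).F.card ≤ A.F.card * SF.card :=
  Finset.card_image_le.trans ((Finset.card_filter_le _ _).trans (Finset.card_product _ _).le)

theorem card_prodVA_δ_le : (prodVA A f s0 SF Acc).δ.card ≤ A.δ.card * SF.card :=
  Finset.card_image_le.trans (Finset.card_product _ _).le

theorem vaSize_prodVA_le : vaSize (prodVA A f s0 SF Acc) ≤ 1 + 3 * vaSize A * SF.card := by
  have hF : A.F.card ≤ (statesOf A).card :=
    Finset.card_le_card fun q hq => by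
      unfold statesOf
      exact Finset.mem_insert_of_mem (Finset.mem_union_left _ (Finset.mem_union_left _ hq))
  have hP := card_statesOf_le (prodVA A f s0 SF Acc)
  have hPF : (prodVA A f s0 SF Acc).F.card ≤ A.F.card * SF.card := card_prodVA_F_le
  have hPδ : (prodVA A f s0 SF Acc).δ.card ≤ A.δ.card * SF.card := card_prodVA_δ_le
  unfold vaSize
  nlinarith

end Product

section Statuses

variable (A1 A2 : VA Sig)

noncomputable def sharedVars : Finset ℕ :=
  (varsOf A1 ∩ varsOf A2).filter fun x => ∀ ls, AcceptsWith A2 ls → VLabel.openv x ∈ ls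

noncomputable def sharedOps : Finset (VLabel Sig) :=
  (sharedVars A1 A2).image .openv ∪ (sharedVars A1 A2).image .closev

def Done (q : ℕ) (l : VLabel Sig) : Prop := ∃ ls, PrefixRun A1 ls q ∧ l ∈ ls

noncomputable def blockOps (qs q : ℕ) : Finset (VLabel Sig) :=
  (sharedOps A1 A2).filter fun l => Done A1 q l ∧ ¬ Done A1 qs l

variable {A1 A2}

theorem mem_sharedOps {l : VLabel Sig} :
    l ∈ sharedOps A1 A2 ↔ ∃ x ∈ sharedVars A1 A2, l = .openv x ∨ l = .closev x := by
  simp only [sharedOps, Finset.mem_union, Finset.mem_image]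
  constructor
  · rintro (⟨x, hx, rfl⟩ | ⟨x, hx, rfl⟩)
    exacts [⟨x, hx, .inl rfl⟩, ⟨x, hx, .inr rfl⟩]
  · rintro ⟨x, hx, rfl | rfl⟩
    exacts [.inl ⟨x, hx, rfl⟩, .inr ⟨x, hx, rfl⟩]

theorem isLetterL_of_mem_sharedOps {l : VLabel Sig} (hl : l ∈ sharedOps A1 A2) :
    isLetterL l = false := by
  obtain ⟨x, -, rfl | rfl⟩ := mem_sharedOps.1 hl <;> rfl

theorem not_mem_letter_of_mem_sharedOps {l : VLabel Sig} (hl : l ∈ sharedOps A1 A2) (σ : Sig) :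
    l ∉ [VLabel.letter σ] := by
  obtain ⟨x, -, rfl | rfl⟩ := mem_sharedOps.1 hl <;> simp

theorem isVarOp_of_mem_sharedOps {l : VLabel Sig} (hl : l ∈ sharedOps A1 A2) : IsVarOp l := by
  obtain ⟨x, -, h⟩ := mem_sharedOps.1 hl
  exact ⟨x, h⟩

theorem sharedVars_subset : sharedVars A1 A2 ⊆ varsOf A1 ∩ varsOf A2 :=
  Finset.filter_subset _ _

theorem closev_mem_of_prefixRun {x : ℕ} (hseq : A1.Sequential) (hsf : SemiFunctionalFor A1 x)
    {q : ℕ} {ls ls' : List (VLabel Sig)} (h : PrefixRun A1 ls q) (h' : PrefixRun A1 ls' q)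
    (hc : .closev x ∈ ls) : .closev x ∈ ls' := by
  have ho' : .openv x ∈ ls' := by
    by_contra hno
    exact hsf ⟨q, ls, ls', h, h', hc, hno⟩
  obtain ⟨hp', ct, qf, hct, hqf⟩ := h'
  have hv' := hseq _ ⟨qf, hp'.append hct, hqf⟩
  have hv := hseq _ ⟨qf, h.1.append hct, hqf⟩
  exact (List.mem_append.1 (((hv' x).2.2.1).1 (List.mem_append_left _ ho'))).resolve_right
    (hv.not_mem_right ⟨x, .inr rfl⟩ hc)

theorem openv_mem_of_prefixRun {x : ℕ} (hseq : A1.Sequential) (hsf : SemiFunctionalFor A1 x)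
    {q : ℕ} {ls ls' : List (VLabel Sig)} (h : PrefixRun A1 ls q) (h' : PrefixRun A1 ls' q)
    (ho : .openv x ∈ ls) : .openv x ∈ ls' := by
  by_contra hno
  by_cases hc : .closev x ∈ ls
  · exact hsf ⟨q, ls', ls', h', h', closev_mem_of_prefixRun hseq hsf h h' hc, hno⟩
  obtain ⟨hp, ct, qf, hct, hqf⟩ := h
  have hv := hseq _ ⟨qf, hp.append hct, hqf⟩
  have hv' := hseq _ ⟨qf, h'.1.append hct, hqf⟩
  have hcct : .closev x ∈ ct :=
    (List.mem_append.1 (((hv x).2.2.1).1 (List.mem_append_left _ ho))).resolve_left hc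
  exact (List.mem_append.1 (((hv' x).2.2.1).2 (List.mem_append_right _ hcct))).elim hno
    (hv.not_mem_right ⟨x, .inl rfl⟩ ho)

/-- Semi-functionality makes the status of a shared operation a function of the state. -/
theorem done_iff {x : ℕ} (hseq : A1.Sequential) (hsf : SemiFunctionalFor A1 x) {q : ℕ}
    {ls : List (VLabel Sig)} (h : PrefixRun A1 ls q) {l : VLabel Sig}
    (hl : l = .openv x ∨ l = .closev x) : Done A1 q l ↔ l ∈ ls := by
  refine ⟨fun ⟨ls', h', hl'⟩ => ?_, fun hl' => ⟨ls, h, hl'⟩⟩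
  rcases hl with rfl | rfl
  exacts [openv_mem_of_prefixRun hseq hsf h' h hl', closev_mem_of_prefixRun hseq hsf h' h hl']

theorem mem_blockOps_iff (hseq : A1.Sequential)
    (hsf : SemiFunctionalForSet A1 (varsOf A1 ∩ varsOf A2))
    {pre blk rest : List (VLabel Sig)} {qs q r : ℕ} (hpre : A1.PathFrom A1.q0 pre qs)
    (hblk : A1.PathFrom qs blk q) (hrest : A1.PathFrom q rest r) (hr : r ∈ A1.F)
    {l : VLabel Sig} : l ∈ blockOps A1 A2 qs q ↔ l ∈ sharedOps A1 A2 ∧ l ∈ blk := by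
  have hv : ValidLabels (pre ++ (blk ++ rest)) :=
    hseq _ ⟨r, hpre.append (hblk.append hrest), hr⟩
  have hrun₁ : PrefixRun A1 pre qs := ⟨hpre, _, r, hblk.append hrest, hr⟩
  have hrun₂ : PrefixRun A1 (pre ++ blk) q := ⟨hpre.append hblk, rest, r, hrest, hr⟩
  simp only [blockOps, Finset.mem_filter, and_congr_right_iff]
  intro hl
  obtain ⟨x, hx, hlx⟩ := mem_sharedOps.1 hl
  have hsfx := hsf x (sharedVars_subset hx)
  rw [done_iff hseq hsfx hrun₁ hlx, done_iff hseq hsfx hrun₂ hlx, List.mem_append]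
  have := hv.not_mem_right (isVarOp_of_mem_sharedOps hl)
  simp only [List.mem_append, not_or] at this
  tauto

end Statuses

section Compatibility

variable {A1 A2 : VA Sig}

def SharedMatch (A1 A2 : VA Sig) (ls1 ls2 : List (VLabel Sig)) : Prop :=
  ∀ e ∈ sharedOps A1 A2, ∀ k, Occ ls1 e k → Occ ls2 e k

theorem ValidLabels.exists_occ_openv_closev {ls : List (VLabel Sig)} (hv : ValidLabels ls) {x : ℕ}
    (ho : .openv x ∈ ls) : ∃ i j, Occ ls (.openv x) i ∧ Occ ls (.closev x) j := by
  obtain ⟨i, hi⟩ := exists_occ ho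
  obtain ⟨j, hj⟩ := exists_occ (((hv x).2.2.1).1 ho)
  exact ⟨i, j, hi, hj⟩

theorem compatible_runMapping_iff (hsync : ∀ x ∈ varsOf A1 ∩ varsOf A2, SyncForVA A2 x)
    {ls1 ls2 : List (VLabel Sig)} {r1 : ℕ} (h1 : A1.PathFrom A1.q0 ls1 r1) (hv1 : ValidLabels ls1)
    (h2 : AcceptsWith A2 ls2) (hv2 : ValidLabels ls2) :
    Compatible (runMapping ls1) (runMapping ls2) ↔ SharedMatch A1 A2 ls1 ls2 := by
  constructor
  · intro hcomp e he k hk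
    obtain ⟨x, hx, hex⟩ := mem_sharedOps.1 he
    have ho1 : .openv x ∈ ls1 := by
      rcases hex with rfl | rfl
      exacts [hk.mem, ((hv1 x).2.2.1).2 hk.mem]
    obtain ⟨i1, j1, hi1, hj1⟩ := hv1.exists_occ_openv_closev ho1
    obtain ⟨i2, j2, hi2, hj2⟩ := hv2.exists_occ_openv_closev ((Finset.mem_filter.1 hx).2 ls2 h2)
    have := hcomp x _ _ (runMapping_of_occ hv1 hi1 hj1) (runMapping_of_occ hv2 hi2 hj2)
    simp only [Prod.mk.injEq, add_left_inj] at this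
    rcases hex with rfl | rfl
    · rwa [hk.unique hi1 ((hv1 x).1), this.1]
    · rwa [hk.unique hj1 ((hv1 x).2.1), this.2]
  · intro hmatch x s1 s2 e1 e2
    have ho1 : .openv x ∈ ls1 := by
      by_contra h
      simp [runMapping, h] at e1
    have ho2 : .openv x ∈ ls2 := by
      by_contra h
      simp [runMapping, h] at e2
    obtain ⟨qf, hp2, hqf⟩ := h2
    have hX : x ∈ varsOf A1 ∩ varsOf A2 :=
      Finset.mem_inter.2 ⟨h1.mem_varsOf ho1 (by simp [labelVars]),
        hp2.mem_varsOf ho2 (by simp [labelVars])⟩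
    have hx : x ∈ sharedVars A1 A2 := by
      refine Finset.mem_filter.2 ⟨hX, ?_⟩
      rcases (hsync x hX).2.2 with hall | hnone
      · exact fun ls hls => (hall ls hls).1
      · exact absurd ho2 (hnone ls2 ⟨qf, hp2, hqf⟩).1
    obtain ⟨i, j, hi, hj⟩ := hv1.exists_occ_openv_closev ho1
    have hi2 := hmatch _ (mem_sharedOps.2 ⟨x, hx, .inl rfl⟩) i hi
    have hj2 := hmatch _ (mem_sharedOps.2 ⟨x, hx, .inr rfl⟩) j hj
    rw [runMapping_of_occ hv1 hi hj] at e1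
    rw [runMapping_of_occ hv2 hi2 hj2] at e2
    exact Option.some.inj (e1.symm.trans e2)

theorem uniqueTarget_of_mem_sharedOps (hsync : ∀ x ∈ varsOf A1 ∩ varsOf A2, SyncForVA A2 x)
    {e : VLabel Sig} (he : e ∈ sharedOps A1 A2) : UniqueTarget A2 e := by
  obtain ⟨x, hx, rfl | rfl⟩ := mem_sharedOps.1 he
  exacts [(hsync x (sharedVars_subset hx)).1, (hsync x (sharedVars_subset hx)).2.1]

end Compatibility

section Anchors

variable (A2 : VA Sig) (d : List Sig)

noncomputable def opTarget (l : VLabel Sig) : ℕ :=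
  if h : UniqueTarget A2 l then Classical.choose h else 0

def CoReachable (q : ℕ) : Prop := ∃ ls qf, A2.PathFrom q ls qf ∧ qf ∈ A2.F

/-- From the anchor `p2`, reached after `c2` letters, `A2` can read the letters of `d` up to
position `c` and then perform the block `E` of operations, finishing with `e`. -/
def IsExit (p2 c2 : ℕ) (E : Finset (VLabel Sig)) (c : ℕ) (e : VLabel Sig) : Prop :=
  ∃ v, A2.PathFrom p2 (v ++ [e]) (opTarget A2 e) ∧ readWord v = (d.drop c2).take (c - c2) ∧
    ∀ e' ∈ E, Occ (v ++ [e]) e' (c - c2)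

/-- From the anchor `p2`, reached after `c2` letters, `A2` can read the rest of `d`, perform the
operations `E` after its last letter, and accept. -/
def AcceptsRest (p2 c2 : ℕ) (E : Finset (VLabel Sig)) : Prop :=
  ∃ v qf, A2.PathFrom p2 v qf ∧ qf ∈ A2.F ∧ readWord v = d.drop c2 ∧
    ∀ e ∈ E, Occ v e (d.length - c2)

/-- The update of the anchor `(p2, c2)` by the block `E` of shared operations performed after
`c` letters. A synchronized `A2` must sit in `opTarget e` after the last operation `e` of the
block, and by `isExit_unique` there is at most one candidate for `e`. -/
noncomputable def blockStep (E : Finset (VLabel Sig)) (c : ℕ) :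
    Option (ℕ × ℕ) → Option (ℕ × ℕ)
  | none => none
  | some (p2, c2) =>
    if E = ∅ then some (p2, c2)
    else if h : ∃ e ∈ E, IsExit A2 d p2 c2 E c e ∧ CoReachable A2 (opTarget A2 e) then
      some (opTarget A2 h.choose, c)
    else none

variable {A2 d}

theorem eq_opTarget {l : VLabel Sig} (hU : UniqueTarget A2 l) {p q : ℕ}
    (h : (p, l, q) ∈ A2.δ) : q = opTarget A2 l := by
  rw [opTarget, dif_pos hU]
  exact Classical.choose_spec hU p q h

theorem VA.PathFrom.of_uniqueTarget {p q : ℕ} {a b : List (VLabel Sig)} {l : VLabel Sig}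
    (h : A2.PathFrom p (a ++ l :: b) q) (hU : UniqueTarget A2 l) :
    A2.PathFrom p (a ++ [l]) (opTarget A2 l) ∧ A2.PathFrom (opTarget A2 l) b q := by
  obtain ⟨m, ha, hlb⟩ := h.split
  rcases hlb with _ | ⟨hl, hb⟩
  rw [← eq_opTarget hU hl]
  exact ⟨ha.append (.single hl), hb⟩

/-- Two exits `e1 ≠ e2` of the same block would let an accepting run of `A2` perform `e1`,
then `e2` (back at `opTarget e2`), then `e1` again: the sequential `A2` forbids this. -/
theorem isExit_unique (hseq : A2.Sequential) {p2 c2 c : ℕ} {E : Finset (VLabel Sig)}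
    {e1 e2 : VLabel Sig} (hU : ∀ e ∈ E, UniqueTarget A2 e) (hop : ∀ e ∈ E, IsVarOp e)
    (he1 : e1 ∈ E) (he2 : e2 ∈ E) (hreach : ∃ pls, A2.PathFrom A2.q0 pls p2)
    (h1 : IsExit A2 d p2 c2 E c e1) (h2 : IsExit A2 d p2 c2 E c e2)
    (hco : CoReachable A2 (opTarget A2 e1)) : e1 = e2 := by
  by_contra hne
  obtain ⟨pls, hpls⟩ := hreach
  obtain ⟨v1, hv1, -, hE1⟩ := h1
  obtain ⟨v2, hv2, -, hE2⟩ := h2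
  obtain ⟨ct, qf, hct, hqf⟩ := hco
  have mem_of_occ : ∀ {v : List (VLabel Sig)} {e e' : VLabel Sig} {k : ℕ}, e' ≠ e →
      Occ (v ++ [e]) e' k → e' ∈ v := fun hne' h =>
    (List.mem_append.1 h.mem).resolve_right (by simpa using hne')
  obtain ⟨a1, b1, rfl⟩ := List.append_of_mem (mem_of_occ (Ne.symm hne) (hE1 e2 he2))
  obtain ⟨a2, b2, rfl⟩ := List.append_of_mem (mem_of_occ hne (hE2 e1 he1))
  have hback1 := (show A2.PathFrom p2 (a1 ++ e2 :: (b1 ++ [e1])) (opTarget A2 e1) by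
    simpa using hv1).of_uniqueTarget (hU e2 he2)
  have hback2 := (show A2.PathFrom p2 (a2 ++ e1 :: (b2 ++ [e2])) (opTarget A2 e2) by
    simpa using hv2).of_uniqueTarget (hU e1 he1)
  have hrun := hpls.append (hv1.append (hback2.2.append (hback1.2.append hct)))
  have hcount := (hseq _ ⟨qf, hrun, hqf⟩).count_le_one (hop e1 he1)
  simp [List.count_append, Ne.symm hne] at hcount
  omega

theorem blockStep_eq_of_isExit (hseq : A2.Sequential) {p2 c2 c : ℕ} {E : Finset (VLabel Sig)}
    {e : VLabel Sig} (hU : ∀ e ∈ E, UniqueTarget A2 e) (hop : ∀ e ∈ E, IsVarOp e)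
    (hreach : ∃ pls, A2.PathFrom A2.q0 pls p2) (he : e ∈ E) (hexit : IsExit A2 d p2 c2 E c e)
    (hco : CoReachable A2 (opTarget A2 e)) :
    blockStep A2 d E c (some (p2, c2)) = some (opTarget A2 e, c) := by
  have hex : ∃ e ∈ E, IsExit A2 d p2 c2 E c e ∧ CoReachable A2 (opTarget A2 e) :=
    ⟨e, he, hexit, hco⟩
  rw [blockStep, if_neg (Finset.ne_empty_of_mem he), dif_pos hex,
    isExit_unique hseq hU hop hex.choose_spec.1 he hreach hex.choose_spec.2.1 hexit
      hex.choose_spec.2.2]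

end Anchors

section Soundness

variable {A1 A2 : VA Sig} {d : List Sig}

variable (A1 A2 d) in
def SoundAnchor (pre : List (VLabel Sig)) : Option (ℕ × ℕ) → Prop
  | none => True
  | some (p2, c2) => ∃ pls, A2.PathFrom A2.q0 pls p2 ∧ readWord pls = d.take c2 ∧
      c2 ≤ pre.countP isLetterL ∧ SharedMatch A1 A2 pre pls

theorem soundAnchor_blockStep {pre blk : List (VLabel Sig)} {σ : Sig}
    {E : Finset (VLabel Sig)} {w : Option (ℕ × ℕ)} (hd : pre.countP isLetterL < d.length)
    (hlf : LetterFree blk) (hE : ∀ e, e ∈ E ↔ e ∈ sharedOps A1 A2 ∧ e ∈ blk)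
    (h : SoundAnchor A1 A2 d pre w) :
    SoundAnchor A1 A2 d (pre ++ blk ++ [.letter σ])
      (blockStep A2 d E (pre.countP isLetterL) w) := by
  rcases w with _ | ⟨p2, c2⟩
  · trivial
  obtain ⟨pls, hpls, hread, hc2, hmatch⟩ := h
  set c := pre.countP isLetterL
  have hcount : (pre ++ blk ++ [VLabel.letter σ]).countP isLetterL = c + 1 := by
    simp [List.countP_append, hlf.countP_eq_zero, isLetterL, c]
  have hplsc : pls.countP isLetterL = c2 := countP_eq_of_readWord_eq_take hread (by omega)
  have hocc : ∀ e ∈ sharedOps A1 A2, ∀ k, Occ (pre ++ blk ++ [VLabel.letter σ]) e k →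
      Occ pre e k ∨ (e ∈ E ∧ k = c) := by
    intro e he k hk
    have hk' := hk.of_append_of_not_mem_right (not_mem_letter_of_mem_sharedOps he σ)
    exact (occ_block hlf hk').imp_right fun ⟨heu, hk⟩ => ⟨(hE e).2 ⟨he, heu⟩, hk⟩
  by_cases hE0 : E = ∅
  · rw [blockStep, if_pos hE0]
    refine ⟨pls, hpls, hread, by omega, fun e he k hk => ?_⟩
    rcases hocc e he k hk with h | ⟨h, -⟩
    · exact hmatch e he k h
    · simp [hE0] at h
  by_cases hex : ∃ e ∈ E, IsExit A2 d p2 c2 E c e ∧ CoReachable A2 (opTarget A2 e)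
  · rw [blockStep, if_neg hE0, dif_pos hex]
    obtain ⟨he, ⟨v, hv, hvread, hvocc⟩, -⟩ := hex.choose_spec
    refine ⟨pls ++ (v ++ [hex.choose]), hpls.append hv, ?_, by omega, fun e' he' k hk => ?_⟩
    · have hlast : readWord [hex.choose] = [] :=
        LetterFree.readWord_eq_nil fun l hl => by
          rw [List.mem_singleton.1 hl]
          exact isLetterL_of_mem_sharedOps ((hE _).1 he).1
      rw [readWord_append, readWord_append, hread, hvread, hlast, List.append_nil,
        ← List.take_add, Nat.add_sub_cancel' hc2]
    · rcases hocc e' he' k hk with h | ⟨h, rfl⟩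
      · exact (hmatch e' he' k h).append_right _
      · have := (hvocc e' h).append_left pls
        rwa [hplsc, Nat.add_sub_cancel' hc2] at this
  · rw [blockStep, if_neg hE0, dif_neg hex]
    trivial

theorem SoundAnchor.exists_run {pre blk : List (VLabel Sig)} {E : Finset (VLabel Sig)}
    {p2 c2 : ℕ} (hd : pre.countP isLetterL = d.length) (hlf : LetterFree blk)
    (hE : ∀ e, e ∈ E ↔ e ∈ sharedOps A1 A2 ∧ e ∈ blk)
    (h : SoundAnchor A1 A2 d pre (some (p2, c2))) (hacc : AcceptsRest A2 d p2 c2 E) :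
    ∃ ls2, AcceptsWith A2 ls2 ∧ readWord ls2 = d ∧ SharedMatch A1 A2 (pre ++ blk) ls2 := by
  obtain ⟨pls, hpls, hread, hc2, hmatch⟩ := h
  obtain ⟨v, qf, hv, hqf, hvread, hvocc⟩ := hacc
  have hplsc : pls.countP isLetterL = c2 := countP_eq_of_readWord_eq_take hread (by omega)
  refine ⟨pls ++ v, ⟨qf, hpls.append hv, hqf⟩, by simp [hread, hvread], fun e he k hk => ?_⟩
  rcases occ_block hlf hk with h | ⟨h, rfl⟩
  · exact (hmatch e he k h).append_right _
  · have := (hvocc e ((hE e).2 ⟨he, h⟩)).append_left pls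
    rwa [hplsc, ← hd, Nat.add_sub_cancel' (hd ▸ hc2)] at this

end Soundness

section Completeness

variable {A1 A2 : VA Sig} {d : List Sig}

theorem SharedMatch.mem_left {u v pf sf : List (VLabel Sig)}
    (hmatch : SharedMatch A1 A2 (u ++ v) (pf ++ sf)) (hv2 : ValidLabels (pf ++ sf))
    (hlt : pf.countP isLetterL < u.countP isLetterL) {e : VLabel Sig} (he : e ∈ sharedOps A1 A2)
    (he1 : e ∈ u ++ v) (hpf : e ∈ pf) : e ∈ u := by
  by_contra hu
  obtain ⟨k, hk⟩ := exists_occ he1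
  obtain ⟨k', -, rfl⟩ := hk.of_append_of_not_mem_left hu
  obtain ⟨k'', hk''⟩ := exists_occ hpf
  have := (hmatch e he _ hk).unique (hk''.append_right sf)
    (hv2.count_le_one (isVarOp_of_mem_sharedOps he))
  have := hk''.le_countP
  omega

theorem occ_suffix_of_mem_block {pre blk tail pf sf : List (VLabel Sig)}
    (hv1 : ValidLabels (pre ++ blk ++ tail))
    (hmatch : SharedMatch A1 A2 (pre ++ blk ++ tail) (pf ++ sf)) (hlf : LetterFree blk)
    (hiff : ∀ e ∈ sharedOps A1 A2, e ∈ pre ++ blk ++ tail → (e ∈ pf ↔ e ∈ pre))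
    {e : VLabel Sig} (he : e ∈ sharedOps A1 A2) (heu : e ∈ blk) :
    e ∉ pf ∧ Occ sf e (pre.countP isLetterL - pf.countP isLetterL) := by
  have he1 : e ∈ pre ++ blk ++ tail := by simp [heu]
  have hnpre : e ∉ pre := fun h =>
    (show ValidLabels (pre ++ (blk ++ tail)) by simpa using hv1).not_mem_right
      (isVarOp_of_mem_sharedOps he) h (by simp [heu])
  have hnpf : e ∉ pf := fun h => hnpre ((hiff e he he1).1 h)
  obtain ⟨a, b, rfl⟩ := List.append_of_mem heu
  have hocc : Occ (pre ++ (a ++ e :: b) ++ tail) e (pre.countP isLetterL) :=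
    ⟨pre ++ a, b ++ tail, by simp,
      by simp [List.countP_append, (letterFree_append.1 hlf).1.countP_eq_zero]⟩
  obtain ⟨k, hk, hck⟩ := (hmatch e he _ hocc).of_append_of_not_mem_left hnpf
  exact ⟨hnpf, by rwa [hck, Nat.add_sub_cancel_left]⟩

theorem isExit_of_last {pf a b : List (VLabel Sig)} {em : VLabel Sig} {E : Finset (VLabel Sig)}
    {p2 qf c2 c : ℕ} (hsf : A2.PathFrom p2 (a ++ em :: b) qf) (hU : UniqueTarget A2 em)
    (hread : readWord (pf ++ (a ++ em :: b)) = d) (hpfc : pf.countP isLetterL = c2)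
    (hac : a.countP isLetterL = c - c2) (hocc : ∀ e ∈ E, Occ (a ++ em :: b) e (c - c2))
    (hb : ∀ e ∈ b, e ∉ E) : IsExit A2 d p2 c2 E c em := by
  refine ⟨a, (hsf.of_uniqueTarget hU).1, ?_, fun e he => ?_⟩
  · have hsfread := (readWord_eq_take_drop hread).2
    rw [hpfc] at hsfread
    rw [← hac]
    exact (readWord_eq_take_drop hsfread).1
  · have := hocc e he
    rw [List.append_cons] at this
    exact this.of_append_of_not_mem_right fun h => hb e h he

theorem mem_cut_after_last_iff {pre blk rest pf a b : List (VLabel Sig)} {σ : Sig}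
    {em : VLabel Sig} {E : Finset (VLabel Sig)}
    (hmatch : SharedMatch A1 A2 (pre ++ blk ++ ([.letter σ] ++ rest)) (pf ++ (a ++ em :: b)))
    (hv2 : ValidLabels (pf ++ (a ++ em :: b)))
    (hlt : (pf ++ (a ++ [em])).countP isLetterL <
      (pre ++ blk ++ [VLabel.letter σ]).countP isLetterL)
    (hiff : ∀ e ∈ sharedOps A1 A2, e ∈ pre ++ blk ++ ([.letter σ] ++ rest) → (e ∈ pf ↔ e ∈ pre))
    (hE : ∀ e, e ∈ E ↔ e ∈ sharedOps A1 A2 ∧ e ∈ blk) (hsub : ∀ e ∈ E, e ∈ a ++ em :: b)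
    (hb : ∀ e ∈ b, e ∉ E) {e : VLabel Sig} (he : e ∈ sharedOps A1 A2)
    (he1 : e ∈ pre ++ blk ++ ([.letter σ] ++ rest)) :
    e ∈ pf ++ (a ++ [em]) ↔ e ∈ pre ++ blk ++ [.letter σ] := by
  refine ⟨fun hm => ?_, fun hm => ?_⟩
  · exact SharedMatch.mem_left (by simpa using hmatch) (by simpa using hv2) hlt he
      (by simpa using he1) hm
  rcases List.mem_append.1 hm with hm | hσ
  · rcases List.mem_append.1 hm with hm | hm
    · exact List.mem_append_left _ ((hiff e he he1).2 hm)
    · have heE := (hE e).2 ⟨he, hm⟩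
      have := hsub e heE
      simp only [List.mem_append, List.mem_cons] at this ⊢
      have := hb e
      tauto
  · exact absurd hσ (not_mem_letter_of_mem_sharedOps he σ)

variable (A1 A2) in
/-- `ls2` is a run of `A2` matching `ls1`; the anchor cuts it right after the shared operations
of `pre`. -/
def CompleteAnchor (ls1 ls2 pre : List (VLabel Sig)) : Option (ℕ × ℕ) → Prop
  | none => False
  | some (p2, c2) => ∃ pf sf, ls2 = pf ++ sf ∧ A2.PathFrom A2.q0 pf p2 ∧
      (∃ qf ∈ A2.F, A2.PathFrom p2 sf qf) ∧ pf.countP isLetterL = c2 ∧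
      c2 ≤ pre.countP isLetterL ∧
      ∀ e ∈ sharedOps A1 A2, e ∈ ls1 → (e ∈ pf ↔ e ∈ pre)

theorem completeAnchor_blockStep {ls1 ls2 pre blk rest : List (VLabel Sig)} {σ : Sig}
    {E : Finset (VLabel Sig)} {w : Option (ℕ × ℕ)} (hseq2 : A2.Sequential)
    (hU : ∀ e ∈ E, UniqueTarget A2 e) (h1 : ls1 = pre ++ blk ++ VLabel.letter σ :: rest)
    (hv1 : ValidLabels ls1) (hv2 : ValidLabels ls2) (hmatch : SharedMatch A1 A2 ls1 ls2)
    (hread2 : readWord ls2 = d) (hlf : LetterFree blk)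
    (hE : ∀ e, e ∈ E ↔ e ∈ sharedOps A1 A2 ∧ e ∈ blk)
    (h : CompleteAnchor A1 A2 ls1 ls2 pre w) :
    CompleteAnchor A1 A2 ls1 ls2 (pre ++ blk ++ [.letter σ])
      (blockStep A2 d E (pre.countP isLetterL) w) := by
  rcases w with _ | ⟨p2, c2⟩
  · exact h.elim
  obtain ⟨pf, sf, rfl, hpf, ⟨qf, hqf, hsf⟩, hpfc, hc2, hiff⟩ := h
  set c := pre.countP isLetterL
  have h1' : ls1 = pre ++ blk ++ ([.letter σ] ++ rest) := by simpa using h1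
  subst h1'
  have hsuffix : ∀ e ∈ E, e ∉ pf ∧ Occ sf e (c - c2) := fun e he =>
    hpfc ▸ occ_suffix_of_mem_block hv1 hmatch hlf hiff ((hE e).1 he).1 ((hE e).1 he).2
  have hcount : (pre ++ blk ++ [VLabel.letter σ]).countP isLetterL = c + 1 := by
    simp [List.countP_append, hlf.countP_eq_zero, isLetterL, c]
  by_cases hE0 : E = ∅
  · rw [blockStep, if_pos hE0]
    refine ⟨pf, sf, rfl, hpf, ⟨qf, hqf, hsf⟩, hpfc, by omega, fun e he he1 => ?_⟩
    have heu : e ∉ blk := fun h => by simpa [hE0] using (hE e).2 ⟨he, h⟩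
    have hσ := not_mem_letter_of_mem_sharedOps he σ
    rw [hiff e he he1]
    simp only [List.mem_append] at hσ ⊢
    tauto
  have hop : ∀ e ∈ E, IsVarOp e := fun e he => isVarOp_of_mem_sharedOps ((hE e).1 he).1
  obtain ⟨e0, he0⟩ := Finset.nonempty_iff_ne_empty.2 hE0
  obtain ⟨a, em, b, rfl, hem, hb⟩ :=
    List.exists_last_occurrence (p := (· ∈ E)) ⟨e0, (hsuffix e0 he0).2.mem, he0⟩
  have hcount_em : (a ++ em :: b).count em ≤ 1 := by
    have := hv2.count_le_one (hop em hem)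
    simp only [List.count_append] at this ⊢
    omega
  have hac : a.countP isLetterL = c - c2 :=
    ((hsuffix em hem).2.unique ⟨a, b, rfl, rfl⟩ hcount_em).symm
  have hpath := hsf.of_uniqueTarget (hU em hem)
  rw [blockStep_eq_of_isExit hseq2 hU hop ⟨pf, hpf⟩ hem
    (isExit_of_last hsf (hU em hem) hread2 hpfc hac (fun e he => (hsuffix e he).2) hb)
    ⟨b, qf, hpath.2, hqf⟩]
  have hpfc' : (pf ++ (a ++ [em])).countP isLetterL = c := by
    simp [List.countP_append, hpfc, hac, isLetterL_of_mem_sharedOps ((hE em).1 hem).1]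
    omega
  refine ⟨pf ++ (a ++ [em]), b, by simp, hpf.append hpath.1, ⟨qf, hqf, hpath.2⟩, hpfc',
    by omega, fun e he he1 => mem_cut_after_last_iff hmatch hv2 (by omega) hiff hE
      (fun e he => (hsuffix e he).2.mem) hb he he1⟩

theorem CompleteAnchor.acceptsRest {ls2 pre blk : List (VLabel Sig)} {E : Finset (VLabel Sig)}
    {p2 c2 : ℕ} (hv1 : ValidLabels (pre ++ blk)) (hmatch : SharedMatch A1 A2 (pre ++ blk) ls2)
    (hread2 : readWord ls2 = d) (hd : pre.countP isLetterL = d.length) (hlf : LetterFree blk)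
    (hE : ∀ e, e ∈ E ↔ e ∈ sharedOps A1 A2 ∧ e ∈ blk)
    (h : CompleteAnchor A1 A2 (pre ++ blk) ls2 pre (some (p2, c2))) : AcceptsRest A2 d p2 c2 E := by
  obtain ⟨pf, sf, rfl, -, ⟨qf, hqf, hsf⟩, hpfc, -, hiff⟩ := h
  refine ⟨sf, qf, hsf, hqf, hpfc ▸ (readWord_eq_take_drop hread2).2, fun e he => ?_⟩
  obtain ⟨he', heu⟩ := (hE e).1 he
  have := (occ_suffix_of_mem_block (tail := []) (by simpa using hv1) (by simpa using hmatch)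
    hlf (by simpa using hiff) he' heu).2
  rwa [hd, hpfc] at this

end Completeness

section Checker

/-- The state of the checker run alongside `A1`: the number of letters read so far, the state of
`A1` right after the last letter (where the current block of operations started), and the
anchor in `A2`. -/
structure ChkState where
  pos : ℕ
  blockStart : ℕ
  anchor : Option (ℕ × ℕ)

def ChkState.equiv : ChkState ≃ ℕ × ℕ × Option (ℕ × ℕ) where
  toFun s := (s.pos, s.blockStart, s.anchor)
  invFun t := ⟨t.1, t.2.1, t.2.2⟩
  left_inv _ := rfl
  right_inv _ := rfl

instance : Encodable ChkState := Encodable.ofEquiv _ ChkState.equiv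

variable (A1 A2 : VA Sig) (d : List Sig)

noncomputable def chkStep (s : ChkState) : ℕ × VLabel Sig × ℕ → ChkState
  | (q, .letter _, q') =>
    ⟨min (s.pos + 1) d.length, q',
      blockStep A2 d (blockOps A1 A2 s.blockStart q) s.pos s.anchor⟩
  | _ => s

def chkInit : ChkState := ⟨0, A1.q0, some (A2.q0, 0)⟩

noncomputable def anchorSet : Finset (Option (ℕ × ℕ)) :=
  insert none ((statesOf A2 ×ˢ Finset.range (d.length + 1)).image some)

noncomputable def chkStates : Finset ChkState :=
  (Finset.range (d.length + 1) ×ˢ statesOf A1 ×ˢ anchorSet A2 d).map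
    ChkState.equiv.symm.toEmbedding

def HasCompatibleRun (r : ℕ) (s : ChkState) : Prop :=
  ∃ p2 c2, s.anchor = some (p2, c2) ∧ AcceptsRest A2 d p2 c2 (blockOps A1 A2 s.blockStart r)

noncomputable def diffVA : VA Sig :=
  prodVA A1 (chkStep A1 A2 d) (chkInit A1 A2) (chkStates A1 A2 d) fun r s =>
    ¬ HasCompatibleRun A1 A2 d r s

variable {A1 A2 d}

theorem mem_chkStates {s : ChkState} :
    s ∈ chkStates A1 A2 d ↔
      s.pos < d.length + 1 ∧ s.blockStart ∈ statesOf A1 ∧ s.anchor ∈ anchorSet A2 d := by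
  simp [chkStates, Finset.mem_map_equiv, ChkState.equiv]

theorem blockStep_mem_anchorSet {E : Finset (VLabel Sig)} {c : ℕ} {w : Option (ℕ × ℕ)}
    (hw : w ∈ anchorSet A2 d) (hc : c ≤ d.length) :
    blockStep A2 d E c w ∈ anchorSet A2 d := by
  rcases w with _ | ⟨p2, c2⟩
  · exact Finset.mem_insert_self _ _
  by_cases hE0 : E = ∅
  · rwa [blockStep, if_pos hE0]
  by_cases hex : ∃ e ∈ E, IsExit A2 d p2 c2 E c e ∧ CoReachable A2 (opTarget A2 e)
  · rw [blockStep, if_neg hE0, dif_pos hex]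
    obtain ⟨-, ⟨v, hv, -⟩, -⟩ := hex.choose_spec
    obtain ⟨m, -, hlast⟩ := hv.split
    rcases hlast with _ | ⟨ht, _ | _⟩
    exact Finset.mem_insert_of_mem (Finset.mem_image_of_mem _
      (Finset.mem_product.2 ⟨target_mem_statesOf ht, Finset.mem_range.2 (by omega)⟩))
  · rw [blockStep, if_neg hE0, dif_neg hex]
    exact Finset.mem_insert_self _ _

theorem chkStep_mem_chkStates :
    ∀ s ∈ chkStates A1 A2 d, ∀ t ∈ A1.δ, chkStep A1 A2 d s t ∈ chkStates A1 A2 d := by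
  rintro s hs ⟨q, l, q'⟩ ht
  rcases l with _ | σ | x | x
  case letter =>
    obtain ⟨hpos, -, hanchor⟩ := mem_chkStates.1 hs
    exact mem_chkStates.2 ⟨by simp [chkStep], target_mem_statesOf ht,
      blockStep_mem_anchorSet hanchor (by omega)⟩
  all_goals exact hs

theorem chkInit_mem_chkStates : chkInit A1 A2 ∈ chkStates A1 A2 d :=
  mem_chkStates.2 ⟨by simp [chkInit], q0_mem_statesOf,
    Finset.mem_insert_of_mem (Finset.mem_image_of_mem _ (Finset.mem_product.2
      ⟨q0_mem_statesOf, by simp⟩))⟩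

theorem card_chkStates_le :
    (chkStates A1 A2 d).card ≤
      (d.length + 1) * ((statesOf A1).card * (1 + (statesOf A2).card * (d.length + 1))) := by
  rw [chkStates, Finset.card_map, Finset.card_product, Finset.card_product, Finset.card_range]
  gcongr
  unfold anchorSet
  grw [Finset.card_insert_le, Finset.card_image_le, Finset.card_product, Finset.card_range]
  omega

theorem diffVA_sequential (hseq1 : A1.Sequential) : (diffVA A1 A2 d).Sequential :=
  prodVA_sequential chkStep_mem_chkStates chkInit_mem_chkStates hseq1

theorem trace_chkStep_invariant (Inv : List (VLabel Sig) → Option (ℕ × ℕ) → Prop)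
    {ls1 : List (VLabel Sig)} (hd : ls1.countP isLetterL ≤ d.length)
    (h0 : Inv [] (some (A2.q0, 0)))
    (hstep : ∀ pre blk σ rest qs q r w, LetterFree blk →
      ls1 = pre ++ blk ++ VLabel.letter σ :: rest → pre.countP isLetterL < d.length →
      A1.PathFrom A1.q0 pre qs → A1.PathFrom qs blk q →
      A1.PathFrom q (VLabel.letter σ :: rest) r → r ∈ A1.F → Inv pre w →
      Inv (pre ++ blk ++ [VLabel.letter σ])
        (blockStep A2 d (blockOps A1 A2 qs q) (pre.countP isLetterL) w))
    {u rest : List (VLabel Sig)} {q r : ℕ} {s : ChkState}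
    (hT : A1.Trace (chkStep A1 A2 d) A1.q0 (chkInit A1 A2) u q s) (hu : u ++ rest = ls1)
    (hrest : A1.PathFrom q rest r) (hr : r ∈ A1.F) :
    ∃ pre blk, u = pre ++ blk ∧ LetterFree blk ∧ A1.PathFrom A1.q0 pre s.blockStart ∧
      A1.PathFrom s.blockStart blk q ∧ s.pos = pre.countP isLetterL ∧ Inv pre s.anchor := by
  induction u using List.reverseRecOn generalizing rest q s with
  | nil =>
    obtain ⟨rfl, rfl⟩ := hT.nil_inv
    exact ⟨[], [], rfl, by simp [LetterFree], .nil _, .nil _, rfl, h0⟩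
  | append_singleton u l ih =>
    obtain ⟨p, s₁, hT₁, hδ, rfl⟩ := hT.snoc_inv
    obtain ⟨pre, blk, rfl, hlf, hpre, hblk, hpos, hinv⟩ :=
      ih hT₁ (rest := l :: rest) (by simpa using hu) (.cons hδ hrest)
    rcases l with _ | σ | x | x
    case letter =>
      have hcount : (pre ++ blk ++ [VLabel.letter σ]).countP isLetterL =
          pre.countP isLetterL + 1 := by
        simp [List.countP_append, hlf.countP_eq_zero, isLetterL]
      have hle : (pre ++ blk ++ [VLabel.letter σ]).countP isLetterL ≤ d.length := by
        rw [← hu] at hd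
        simp only [List.countP_append] at hd hcount ⊢
        omega
      refine ⟨pre ++ blk ++ [.letter σ], [], by simp, by simp [LetterFree],
        (hpre.append hblk).append (.single hδ), .nil _, ?_, ?_⟩
      · simp only [chkStep, hcount, hpos]
        omega
      · simp only [chkStep, hpos]
        exact hstep pre blk σ rest _ p r _ hlf (by simpa using hu.symm) (by omega) hpre hblk
          (.cons hδ hrest) hr hinv
    all_goals exact ⟨pre, blk ++ [_], by simp,
      letterFree_append.2 ⟨hlf, by simp [LetterFree, isLetterL]⟩,
      hpre, hblk.append (.single hδ), hpos, hinv⟩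

end Checker

section Correctness

variable {A1 A2 : VA Sig} {d : List Sig}

theorem exists_compatible_iff (hseq2 : A2.Sequential)
    (hsync : ∀ x ∈ varsOf A1 ∩ varsOf A2, SyncForVA A2 x) {ls1 : List (VLabel Sig)} {r1 : ℕ}
    (h1 : A1.PathFrom A1.q0 ls1 r1) (hv1 : ValidLabels ls1) :
    (∃ μ2 ∈ vaSem A2 d, Compatible (runMapping ls1) μ2) ↔
      ∃ ls2, AcceptsWith A2 ls2 ∧ readWord ls2 = d ∧ SharedMatch A1 A2 ls1 ls2 := by
  constructor
  · rintro ⟨_, ⟨ls2, hacc, hread, hv2, rfl⟩, hcomp⟩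
    exact ⟨ls2, hacc, hread, (compatible_runMapping_iff hsync h1 hv1 hacc hv2).1 hcomp⟩
  · rintro ⟨ls2, hacc, hread, hmatch⟩
    have hv2 := hseq2 ls2 hacc
    exact ⟨_, ⟨ls2, hacc, hread, hv2, rfl⟩,
      (compatible_runMapping_iff hsync h1 hv1 hacc hv2).2 hmatch⟩

theorem exists_run_of_hasCompatibleRun (hseq1 : A1.Sequential)
    (hsf : SemiFunctionalForSet A1 (varsOf A1 ∩ varsOf A2)) {ls1 : List (VLabel Sig)} {r : ℕ}
    {s : ChkState} (hT : A1.Trace (chkStep A1 A2 d) A1.q0 (chkInit A1 A2) ls1 r s)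
    (hr : r ∈ A1.F) (hd : ls1.countP isLetterL = d.length)
    (h : HasCompatibleRun A1 A2 d r s) :
    ∃ ls2, AcceptsWith A2 ls2 ∧ readWord ls2 = d ∧ SharedMatch A1 A2 ls1 ls2 := by
  obtain ⟨p2, c2, hanchor, hacc⟩ := h
  obtain ⟨pre, blk, rfl, hlf, hpre, hblk, -, hinv⟩ :=
    trace_chkStep_invariant (SoundAnchor A1 A2 d) hd.le
      ⟨[], .nil _, rfl, le_rfl, fun _ _ _ h => absurd h.mem List.not_mem_nil⟩
      (fun _ _ _ _ _ _ _ _ hlf _ hlt hpre hblk hrest hr' hinv =>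
        soundAnchor_blockStep hlt hlf (fun _ => mem_blockOps_iff hseq1 hsf hpre hblk hrest hr')
          hinv)
      hT (List.append_nil _) (.nil r) hr
  rw [hanchor] at hinv
  exact hinv.exists_run (by simpa [List.countP_append, hlf.countP_eq_zero] using hd) hlf
    (fun _ => mem_blockOps_iff hseq1 hsf hpre hblk (.nil r) hr) hacc

theorem hasCompatibleRun_of_sharedMatch (hseq1 : A1.Sequential) (hseq2 : A2.Sequential)
    (hsf : SemiFunctionalForSet A1 (varsOf A1 ∩ varsOf A2))
    (hsync : ∀ x ∈ varsOf A1 ∩ varsOf A2, SyncForVA A2 x) {ls1 ls2 : List (VLabel Sig)}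
    {r : ℕ} {s : ChkState} (hT : A1.Trace (chkStep A1 A2 d) A1.q0 (chkInit A1 A2) ls1 r s)
    (hr : r ∈ A1.F) (hd : ls1.countP isLetterL = d.length) (hacc2 : AcceptsWith A2 ls2)
    (hread2 : readWord ls2 = d) (hmatch : SharedMatch A1 A2 ls1 ls2) :
    HasCompatibleRun A1 A2 d r s := by
  have hv1 := hseq1 ls1 ⟨r, hT.path, hr⟩
  have hv2 := hseq2 ls2 hacc2
  obtain ⟨qf2, hp2, hqf2⟩ := hacc2
  obtain ⟨pre, blk, rfl, hlf, hpre, hblk, -, hinv⟩ :=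
    trace_chkStep_invariant (CompleteAnchor A1 A2 ls1 ls2) hd.le
      ⟨[], ls2, rfl, .nil _, ⟨qf2, hqf2, hp2⟩, rfl, le_rfl, by simp⟩
      (fun _ _ _ _ _ _ _ _ hlf hls1 _ hpre hblk hrest hr' hinv =>
        completeAnchor_blockStep hseq2
          (fun _ he => uniqueTarget_of_mem_sharedOps hsync (Finset.mem_filter.1 he).1)
          hls1 hv1 hv2 hmatch hread2 hlf (fun _ => mem_blockOps_iff hseq1 hsf hpre hblk hrest hr')
          hinv)
      hT (List.append_nil _) (.nil r) hr
  rcases hanchor : s.anchor with _ | ⟨p2, c2⟩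
  · rw [hanchor] at hinv
    exact hinv.elim
  rw [hanchor] at hinv
  exact ⟨p2, c2, hanchor, hinv.acceptsRest hv1 hmatch hread2
    (by simpa [List.countP_append, hlf.countP_eq_zero] using hd) hlf
    (fun _ => mem_blockOps_iff hseq1 hsf hpre hblk (.nil r) hr)⟩

theorem hasCompatibleRun_iff (hseq1 : A1.Sequential) (hseq2 : A2.Sequential)
    (hsf : SemiFunctionalForSet A1 (varsOf A1 ∩ varsOf A2))
    (hsync : ∀ x ∈ varsOf A1 ∩ varsOf A2, SyncForVA A2 x) {ls1 : List (VLabel Sig)} {r : ℕ}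
    {s : ChkState} (hT : A1.Trace (chkStep A1 A2 d) A1.q0 (chkInit A1 A2) ls1 r s)
    (hr : r ∈ A1.F) (hread : readWord ls1 = d) :
    HasCompatibleRun A1 A2 d r s ↔ ∃ μ2 ∈ vaSem A2 d, Compatible (runMapping ls1) μ2 := by
  have hd : ls1.countP isLetterL = d.length := by rw [← hread, length_readWord]
  rw [exists_compatible_iff hseq2 hsync hT.path (hseq1 ls1 ⟨r, hT.path, hr⟩)]
  exact ⟨exists_run_of_hasCompatibleRun hseq1 hsf hT hr hd, fun ⟨_, hacc2, hread2, hmatch⟩ =>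
    hasCompatibleRun_of_sharedMatch hseq1 hseq2 hsf hsync hT hr hd hacc2 hread2 hmatch⟩

theorem vaSem_diffVA (hseq1 : A1.Sequential) (hseq2 : A2.Sequential)
    (hsf : SemiFunctionalForSet A1 (varsOf A1 ∩ varsOf A2))
    (hsync : ∀ x ∈ varsOf A1 ∩ varsOf A2, SyncForVA A2 x) :
    vaSem (diffVA A1 A2 d) d = diffSet (vaSem A1 d) (vaSem A2 d) := by
  ext μ
  simp only [vaSem, diffSet, diffVA, Set.mem_ofPred_eq,
    acceptsWith_prodVA_iff chkStep_mem_chkStates chkInit_mem_chkStates]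
  constructor
  · rintro ⟨ls, ⟨r, s, hT, hr, hno⟩, hread, hv, rfl⟩
    exact ⟨⟨ls, ⟨r, hT.path, hr⟩, hread, hv, rfl⟩, fun μ2 hμ2 hcomp =>
      hno ((hasCompatibleRun_iff hseq1 hseq2 hsf hsync hT hr hread).2 ⟨μ2, hμ2, hcomp⟩)⟩
  · rintro ⟨⟨ls, ⟨r, hp, hr⟩, hread, hv, rfl⟩, hno⟩
    obtain ⟨s, hT⟩ := hp.exists_trace (chkInit A1 A2)
    refine ⟨ls, ⟨r, s, hT, hr, fun h => ?_⟩, hread, hv, rfl⟩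
    obtain ⟨μ2, hμ2, hcomp⟩ := (hasCompatibleRun_iff hseq1 hseq2 hsf hsync hT hr hread).1 h
    exact hno μ2 hμ2 hcomp

theorem vaSize_diffVA_le {N : ℕ} (h1 : vaSize A1 ≤ N) (h2 : vaSize A2 ≤ N)
    (hd : d.length ≤ N) :
    vaSize (diffVA A1 A2 d) ≤ 3 * (N + 1) ^ 5 := by
  have hQ1 : (statesOf A1).card ≤ N := le_trans (Nat.le_add_right _ _) h1
  have hQ2 : (statesOf A2).card ≤ N := le_trans (Nat.le_add_right _ _) h2
  have hcard : (chkStates A1 A2 d).card ≤ (N + 1) ^ 4 :=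
    card_chkStates_le.trans <| calc
      _ ≤ (N + 1) * (N * (1 + N * (N + 1))) := by gcongr
      _ ≤ (N + 1) * (N + 1) ^ 3 := by gcongr; nlinarith
      _ = (N + 1) ^ 4 := by ring
  calc vaSize (diffVA A1 A2 d)
      ≤ 1 + 3 * vaSize A1 * (chkStates A1 A2 d).card := vaSize_prodVA_le
    _ ≤ 1 + 3 * N * (N + 1) ^ 4 := by gcongr
    _ ≤ 3 * (N + 1) ^ 5 := by nlinarith [Nat.one_le_pow 4 (N + 1) N.succ_pos]

end Correctness

theorem statement18 :
    ∃ p : Polynomial ℕ, ∀ (d : List Sig) (A1 A2 : VA Sig),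
      A1.Sequential → A2.Sequential →
      SemiFunctionalForSet A1 (varsOf A1 ∩ varsOf A2) →
      (∀ x ∈ varsOf A1 ∩ varsOf A2, SyncForVA A2 x) →
      ∃ Ad : VA Sig, Ad.Sequential ∧
        vaSem Ad d = diffSet (vaSem A1 d) (vaSem A2 d) ∧
        vaSize Ad ≤
          p.eval (vaSize A1 + vaSize A2 + d.length + (varsOf A1 ∪ varsOf A2).card) := by
  refine ⟨3 * (Polynomial.X + 1) ^ 5, fun d A1 A2 hseq1 hseq2 hsf hsync =>
    ⟨diffVA A1 A2 d, diffVA_sequential hseq1, vaSem_diffVA hseq1 hseq2 hsf hsync, ?_⟩⟩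
  simp only [Polynomial.eval_mul, Polynomial.eval_pow, Polynomial.eval_add, Polynomial.eval_X,
    Polynomial.eval_one, Polynomial.eval_ofNat]
  exact vaSize_diffVA_le (by omega) (by omega) (by omega)

end Spanners
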